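/- arXiv:2109.13802 — 8 statements merged into one kernel-verified Lean document; each statement's English description precedes it below -/
import Mathlib

section
/- A smooth function f on TQ is a constant of the motion of the Rayleigh system (L, 𝓡) if and only if {f, E_L} − [f, 𝓡] = 0, where {·,·} is the Poisson bracket of the symplectic form ω_L and [·,·] is the dissipative bracket. Equivalently, in local coordinates on ℝⁿ × ℝⁿ: ξ_{L,R̄}(f) = {f,E_L} − [f,𝓡]. -/
/- STATEMENT 3: For a Rayleigh system (L, 𝓡), a function f is a constant of
the motion iff {f, E_L} − [f, 𝓡] = 0; in coordinates on ℝⁿ × ℝⁿ this follows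
from ξ_{L,R̄}(f) = {f, E_L} − [f, 𝓡].

We work on TQ = ℝⁿ × ℝⁿ.  The Poincaré–Cartan 2-form ω_L is given abstractly
as a field ω of (pointwise antisymmetric, nondegenerate) bilinear forms.  The
vertical endomorphism is S(a,b) = (0,a).  The Rayleigh force is
R̄ = S*(d𝓡), i.e. R̄(x)(v) = d𝓡(x)(S v).  The forced Euler–Lagrange field ξ
satisfies ι_ξ ω_L = dE_L + R̄.  The Hamiltonian vector field X_f of a function
f satisfies ι_{X_f} ω_L = df; the Poisson bracket is {f, E_L} = ω_L(X_f, X_{E_L})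
and the dissipative bracket is [f, 𝓡] = (S X_f)(𝓡). -/

theorem rayleigh_constant_of_motion_iff (n : ℕ)
    (ω : ((Fin n → ℝ) × (Fin n → ℝ)) →
      ((Fin n → ℝ) × (Fin n → ℝ)) → ((Fin n → ℝ) × (Fin n → ℝ)) → ℝ)
    (hω_bilin : ∀ x, IsBoundedBilinearMap ℝ (fun p :
      ((Fin n → ℝ) × (Fin n → ℝ)) × ((Fin n → ℝ) × (Fin n → ℝ)) => ω x p.1 p.2))
    (hω_antisymm : ∀ x A B, ω x A B = -ω x B A)
    (hω_nondeg : ∀ x A, (∀ B, ω x A B = 0) → A = 0)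
    (EL 𝓡 : (Fin n → ℝ) × (Fin n → ℝ) → ℝ)
    (hEL : ContDiff ℝ (⊤ : ℕ∞) EL) (h𝓡 : ContDiff ℝ (⊤ : ℕ∞) 𝓡)
    -- forced Euler–Lagrange vector field: ι_ξ ω_L = dE_L + S*(d𝓡)
    (ξ : ((Fin n → ℝ) × (Fin n → ℝ)) → (Fin n → ℝ) × (Fin n → ℝ))
    (hξ : ∀ x A, ω x (ξ x) A
      = fderiv ℝ EL x A + fderiv ℝ 𝓡 x ((0 : Fin n → ℝ), A.1))
    -- Hamiltonian vector field of the energy E_L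
    (XEL : ((Fin n → ℝ) × (Fin n → ℝ)) → (Fin n → ℝ) × (Fin n → ℝ))
    (hXEL : ∀ x A, ω x (XEL x) A = fderiv ℝ EL x A)
    -- an arbitrary smooth function f with Hamiltonian vector field X_f
    (f : (Fin n → ℝ) × (Fin n → ℝ) → ℝ) (hf : ContDiff ℝ (⊤ : ℕ∞) f)
    (Xf : ((Fin n → ℝ) × (Fin n → ℝ)) → (Fin n → ℝ) × (Fin n → ℝ))
    (hXf : ∀ x A, ω x (Xf x) A = fderiv ℝ f x A) :
    -- ξ_{L,R̄}(f) = {f, E_L} − [f, 𝓡] pointwise, and the characterization of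
    -- constants of the motion
    (∀ x, fderiv ℝ f x (ξ x)
      = ω x (Xf x) (XEL x) - fderiv ℝ 𝓡 x ((0 : Fin n → ℝ), (Xf x).1)) ∧
    ((∀ x, fderiv ℝ f x (ξ x) = 0) ↔
      (∀ x, ω x (Xf x) (XEL x) - fderiv ℝ 𝓡 x ((0 : Fin n → ℝ), (Xf x).1) = 0)) := by
  have key : ∀ x, fderiv ℝ f x (ξ x)
      = ω x (Xf x) (XEL x) - fderiv ℝ 𝓡 x ((0 : Fin n → ℝ), (Xf x).1) := by
    intro x
    have h1 : fderiv ℝ f x (ξ x) = ω x (Xf x) (ξ x) := (hXf x (ξ x)).symm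
    have h2 : ω x (Xf x) (ξ x) = -ω x (ξ x) (Xf x) := hω_antisymm x _ _
    rw [h1, h2, hξ x (Xf x)]
    have h3 : fderiv ℝ EL x (Xf x) = ω x (XEL x) (Xf x) := (hXEL x (Xf x)).symm
    rw [h3, hω_antisymm x (XEL x) (Xf x)]
    ring
  refine ⟨key, ?_⟩
  constructor
  · intro h x; rw [← key x]; exact h x
  · intro h x; rw [key x]; exact h x
end

section
/- Let γ be a 1-form on Q, viewed as a section of T^*Q → Q, and define X^γ_{H,β} = Tπ_Q ∘ X_{H,β} ∘ γ. Then X_{H,β} and X^γ_{H,β} are γ-related (i.e. Tγ ∘ X^γ_{H,β} = X_{H,β} ∘ γ) if and only if X_{H,β} is tangent to the submanifold γ(Q) ⊂ T^*Q. -/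
/- STATEMENT 4: For a 1-form γ on Q (a section q ↦ (q, γ q) of T^*Q → Q) and
the forced Hamiltonian vector field X_{H,β} (in coordinates:
X_{H,β}(q,p) = (∂H/∂p, −∂H/∂q − β)), the fields X_{H,β} and
X^γ_{H,β} = Tπ_Q ∘ X_{H,β} ∘ γ are γ-related (Tγ ∘ X^γ_{H,β} = X_{H,β} ∘ γ)
iff X_{H,β} is tangent to the submanifold γ(Q) ⊂ T^*Q, i.e. iff along γ(Q)
the vector X_{H,β} lies in the image of Tγ. -/

/-- Partial derivative in the `q^i` direction. -/
noncomputable def pdq {n : ℕ} (f : (Fin n → ℝ) × (Fin n → ℝ) → ℝ) (i : Fin n)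
    (x : (Fin n → ℝ) × (Fin n → ℝ)) : ℝ :=
  fderiv ℝ f x (Pi.single i 1, (0 : Fin n → ℝ))

/-- Partial derivative in the `p_i` direction. -/
noncomputable def pdp {n : ℕ} (f : (Fin n → ℝ) × (Fin n → ℝ) → ℝ) (i : Fin n)
    (x : (Fin n → ℝ) × (Fin n → ℝ)) : ℝ :=
  fderiv ℝ f x ((0 : Fin n → ℝ), Pi.single i 1)

theorem gamma_related_iff_tangent (n : ℕ)
    (H : (Fin n → ℝ) × (Fin n → ℝ) → ℝ) (hH : ContDiff ℝ (⊤ : ℕ∞) H)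
    (β : Fin n → (Fin n → ℝ) × (Fin n → ℝ) → ℝ) (hβ : ∀ i, ContDiff ℝ (⊤ : ℕ∞) (β i))
    (γ : (Fin n → ℝ) → (Fin n → ℝ)) (hγ : ContDiff ℝ (⊤ : ℕ∞) γ)
    -- the section Γ : Q → T^*Q associated to the 1-form γ
    (Γ : (Fin n → ℝ) → (Fin n → ℝ) × (Fin n → ℝ)) (hΓ : ∀ q, Γ q = (q, γ q))
    -- the forced Hamiltonian vector field X_{H,β}
    (X : (Fin n → ℝ) × (Fin n → ℝ) → (Fin n → ℝ) × (Fin n → ℝ))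
    (hX : ∀ x, X x = (fun i => pdp H i x, fun i => -(pdq H i x + β i x)))
    -- the projected vector field X^γ_{H,β} = Tπ_Q ∘ X_{H,β} ∘ γ on Q
    (Xγ : (Fin n → ℝ) → (Fin n → ℝ)) (hXγ : ∀ q, Xγ q = (X (Γ q)).1) :
    -- γ-relatedness  ↔  tangency of X_{H,β} to γ(Q)
    (∀ q, fderiv ℝ Γ q (Xγ q) = X (Γ q)) ↔
    (∀ q, ∃ v : Fin n → ℝ, fderiv ℝ Γ q v = X (Γ q)) := by
  have hΓfun : Γ = fun q => (q, γ q) := funext hΓ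
  have hD : ∀ q, HasFDerivAt Γ
      ((ContinuousLinearMap.id ℝ (Fin n → ℝ)).prod (fderiv ℝ γ q)) q := by
    intro q
    rw [hΓfun]
    exact HasFDerivAt.prodMk (hasFDerivAt_id q)
      ((hγ.differentiable (by simp) q).hasFDerivAt)
  constructor
  · intro h q
    exact ⟨Xγ q, h q⟩
  · intro h q
    obtain ⟨v, hv⟩ := h q
    have hfd : fderiv ℝ Γ q = (ContinuousLinearMap.id ℝ (Fin n → ℝ)).prod (fderiv ℝ γ q) :=
      (hD q).fderiv
    have hv1 : v = (X (Γ q)).1 := by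
      have := congrArg Prod.fst hv
      rw [hfd] at this
      simpa using this
    rw [← hv, hXγ q, ← hv1]
end

section
/- Let γ be a closed 1-form on ℝⁿ satisfying the forced Hamilton–Jacobi equation d(H ∘ γ) = −γ*β. Then for every curve σ: ℝ → ℝⁿ with σ̇^i(t) = (∂H/∂p_i)(σ(t), γ(σ(t))), the curve t ↦ (σ(t), γ(σ(t))) is a solution of the forced Hamilton equations q̇^i = ∂H/∂p_i, ṗ_i = −(∂H/∂q^i + β_i). -/
/-- Partial derivative of a function on the base ℝⁿ. -/
noncomputable def pd {n : ℕ} (f : (Fin n → ℝ) → ℝ) (i : Fin n)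
    (q : Fin n → ℝ) : ℝ :=
  fderiv ℝ f q (Pi.single i 1)

lemma clm_apply_eq_sum {n : ℕ} (L : (Fin n → ℝ) →L[ℝ] ℝ) (v : Fin n → ℝ) :
    L v = ∑ i, v i * L (Pi.single i 1) := by
  have hv : v = ∑ i, v i • (Pi.single i 1 : Fin n → ℝ) := by
    ext j
    simp [Pi.single_apply, Finset.sum_apply]
  conv_lhs => rw [hv]
  simp [map_sum, map_smul]

theorem closed_HJ_solution_lifts_integral_curves (n : ℕ)
    (H : (Fin n → ℝ) × (Fin n → ℝ) → ℝ) (hH : ContDiff ℝ (⊤ : ℕ∞) H)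
    (β : Fin n → (Fin n → ℝ) × (Fin n → ℝ) → ℝ) (hβ : ∀ i, ContDiff ℝ (⊤ : ℕ∞) (β i))
    (γ : Fin n → (Fin n → ℝ) → ℝ) (hγ : ∀ i, ContDiff ℝ (⊤ : ℕ∞) (γ i))
    -- closedness: ∂γ_i/∂q^j = ∂γ_j/∂q^i
    (hclosed : ∀ i j q, pd (γ i) j q = pd (γ j) i q)
    -- Hamilton–Jacobi equation
    (hHJ : ∀ i, ∀ q : Fin n → ℝ,
      pdq H i (q, fun j => γ j q)
        + (∑ j, pdp H j (q, fun k => γ k q) * pd (γ j) i q)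
        + β i (q, fun j => γ j q) = 0) :
    ∀ σ : ℝ → (Fin n → ℝ),
      (∀ t, deriv σ t = fun i => pdp H i (σ t, fun j => γ j (σ t))) →
      ∀ t, deriv (fun s => (σ s, fun j => γ j (σ s))) t
        = ((fun i => pdp H i (σ t, fun j => γ j (σ t))),
           (fun i => -(pdq H i (σ t, fun j => γ j (σ t))
                        + β i (σ t, fun j => γ j (σ t))))) := by
  intro σ hσ t
  have hHJ' : ∀ i, -(pdq H i (σ t, fun j => γ j (σ t)) + β i (σ t, fun j => γ j (σ t)))
      = ∑ j, pdp H j (σ t, fun k => γ k (σ t)) * pd (γ j) i (σ t) := by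
    intro i
    have := hHJ i (σ t)
    linarith
  by_cases hd : DifferentiableAt ℝ σ t
  · have hσ' : HasDerivAt σ (fun i => pdp H i (σ t, fun j => γ j (σ t))) t := by
      rw [← hσ t]; exact hd.hasDerivAt
    have hγd : ∀ j, HasDerivAt (fun s => γ j (σ s))
        (fderiv ℝ (γ j) (σ t) (fun i => pdp H i (σ t, fun j => γ j (σ t)))) t := fun j =>
      ((((hγ j).differentiable (by simp) (σ t)).hasFDerivAt).comp_hasDerivAt t hσ')
    have hpair : HasDerivAt (fun s => (σ s, fun j => γ j (σ s)))
        ((fun i => pdp H i (σ t, fun j => γ j (σ t))),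
         fun j => fderiv ℝ (γ j) (σ t) (fun i => pdp H i (σ t, fun j => γ j (σ t)))) t :=
      hσ'.prodMk (hasDerivAt_pi.2 hγd)
    rw [hpair.deriv]
    refine Prod.ext rfl ?_
    funext i
    dsimp only
    rw [hHJ' i, clm_apply_eq_sum]
    exact Finset.sum_congr rfl fun j _ => by
      rw [show (fderiv ℝ (γ i) (σ t)) (Pi.single j 1) = pd (γ i) j (σ t) from rfl, hclosed i j]
  · have hpd : ¬ DifferentiableAt ℝ (fun s => (σ s, fun j => γ j (σ s))) t := by
      intro h
      exact hd (h.fst)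
    have h0 : deriv σ t = 0 := deriv_zero_of_not_differentiableAt hd
    have hp0 : ∀ i, pdp H i (σ t, fun j => γ j (σ t)) = 0 := by
      intro i
      have := (hσ t).symm.trans h0
      exact congrFun this i
    rw [deriv_zero_of_not_differentiableAt hpd]
    refine Prod.ext ?_ ?_
    · funext i; dsimp only; simp [hp0 i]
    · funext i
      dsimp only
      rw [hHJ' i]
      simp only [hp0]
      simp
end

section
/- Let Φ: Q × U → T^*Q be a complete solution of the forced Hamilton–Jacobi problem for (H,β), assumed to be a global diffeomorphism, and define f_a = π_a ∘ Φ^{-1}: T^*Q → ℝ for a = 1,…,n. Then each f_a is a constant of the motion of X_{H,β}, i.e. X_{H,β}(f_a) = 0, and the f_a are pairwise in involution with respect to the canonical Poisson bracket: {f_a, f_b} = 0. -/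
lemma clm_apply_eq_sum_s8 {n : ℕ} {F : Type*} [NormedAddCommGroup F] [NormedSpace ℝ F]
    (T : (Fin n → ℝ) →L[ℝ] F) (v : Fin n → ℝ) :
    T v = ∑ a, v a • T (Pi.single a 1) := by
  have hv : v = ∑ a, v a • (Pi.single a 1 : Fin n → ℝ) := by
    funext j; simp [Finset.sum_apply, Pi.single_apply]
  conv_lhs => rw [hv]
  simp [map_sum]

theorem complete_solution_gives_involutive_constants (n : ℕ)
    (H : (Fin n → ℝ) × (Fin n → ℝ) → ℝ) (hH : ContDiff ℝ (⊤ : ℕ∞) H)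
    (β : Fin n → (Fin n → ℝ) × (Fin n → ℝ) → ℝ) (hβ : ∀ i, ContDiff ℝ (⊤ : ℕ∞) (β i))
    (U : Set (Fin n → ℝ)) (hU : IsOpen U)
    -- the complete solution Φ(q,λ) = (q, φ q λ) and its global inverse
    (φ : (Fin n → ℝ) → (Fin n → ℝ) → (Fin n → ℝ))
    (hφ : ContDiff ℝ (⊤ : ℕ∞) (fun x : (Fin n → ℝ) × (Fin n → ℝ) => φ x.1 x.2))
    (Φinv : (Fin n → ℝ) × (Fin n → ℝ) → (Fin n → ℝ) × (Fin n → ℝ))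
    (hΦinv : ContDiff ℝ (⊤ : ℕ∞) Φinv)
    (hleft : ∀ q lam, lam ∈ U → Φinv (q, φ q lam) = (q, lam))
    (hright : ∀ x : (Fin n → ℝ) × (Fin n → ℝ),
      (Φinv x).2 ∈ U ∧ ((Φinv x).1, φ (Φinv x).1 (Φinv x).2) = x)
    -- each Φ_λ is a closed 1-form ...
    (hclosed : ∀ lam ∈ U, ∀ i j q,
      pd (fun q' => φ q' lam i) j q = pd (fun q' => φ q' lam j) i q)
    -- ... solving the forced Hamilton–Jacobi equation d(H∘Φ_λ) = −Φ_λ*β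
    (hHJ : ∀ lam ∈ U, ∀ i, ∀ q : Fin n → ℝ,
      pdq H i (q, φ q lam)
        + (∑ j, pdp H j (q, φ q lam) * pd (fun q' => φ q' lam j) i q)
        + β i (q, φ q lam) = 0)
    -- the functions f_a = π_a ∘ Φ⁻¹ and the dynamics X_{H,β}
    (f : Fin n → (Fin n → ℝ) × (Fin n → ℝ) → ℝ)
    (hf : ∀ a x, f a x = (Φinv x).2 a)
    (X : (Fin n → ℝ) × (Fin n → ℝ) → (Fin n → ℝ) × (Fin n → ℝ))
    (hX : ∀ x, X x = (fun i => pdp H i x, fun i => -(pdq H i x + β i x))) :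
    -- the f_a are constants of the motion, pairwise in involution
    (∀ a, ∀ x, fderiv ℝ (f a) x (X x) = 0) ∧
    (∀ a b, ∀ x, (∑ i, (pdq (f a) i x * pdp (f b) i x
      - pdp (f a) i x * pdq (f b) i x)) = 0) := by
  classical
  have hφd : Differentiable ℝ (fun z : (Fin n → ℝ) × (Fin n → ℝ) => φ z.1 z.2) :=
    hφ.differentiable (by simp)
  have hΦinvd : Differentiable ℝ Φinv := hΦinv.differentiable (by simp)
  set Φf : (Fin n → ℝ) × (Fin n → ℝ) → (Fin n → ℝ) × (Fin n → ℝ) := fun p => (p.1, φ p.1 p.2) with hΦfdef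
  have hΦfd : Differentiable ℝ Φf := differentiable_fst.prodMk hφd
  set D : (Fin n → ℝ) × (Fin n → ℝ) → ((Fin n → ℝ) × (Fin n → ℝ) →L[ℝ] (Fin n → ℝ)) := fun p => fderiv ℝ (fun z : (Fin n → ℝ) × (Fin n → ℝ) => φ z.1 z.2) p with hDdef
  set A : (Fin n → ℝ) × (Fin n → ℝ) → ((Fin n → ℝ) × (Fin n → ℝ) →L[ℝ] (Fin n → ℝ) × (Fin n → ℝ)) := fun x => fderiv ℝ Φinv x with hAdef
  -- representation of the derivative of Φf
  have hD : ∀ (p : (Fin n → ℝ) × (Fin n → ℝ)) (w : (Fin n → ℝ) × (Fin n → ℝ)), fderiv ℝ Φf p w = (w.1, D p w) := by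
    intro p w
    have h : HasFDerivAt Φf
        ((ContinuousLinearMap.fst ℝ (Fin n → ℝ) (Fin n → ℝ)).prod (D p)) p :=
      (hasFDerivAt_fst).prodMk (hφd p).hasFDerivAt
    rw [h.fderiv]
    rfl
  -- right inverse: L ∘ A = id
  have hLA : ∀ (x : (Fin n → ℝ) × (Fin n → ℝ)) (w : (Fin n → ℝ) × (Fin n → ℝ)), ((A x w).1, D (Φinv x) (A x w)) = w := by
    intro x w
    have hcomp : Φf ∘ Φinv = id := funext fun y => (hright y).2
    have h1 : fderiv ℝ (Φf ∘ Φinv) x = (fderiv ℝ Φf (Φinv x)).comp (A x) :=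
      fderiv_comp x (hΦfd _) (hΦinvd x)
    have h2 : fderiv ℝ (Φf ∘ Φinv) x = ContinuousLinearMap.id ℝ ((Fin n → ℝ) × (Fin n → ℝ)) := by
      rw [hcomp, fderiv_id]
    have h3 := congrArg (fun T : (Fin n → ℝ) × (Fin n → ℝ) →L[ℝ] (Fin n → ℝ) × (Fin n → ℝ) => T w) (h1.symm.trans h2)
    simpa [hD] using h3
  -- left inverse: A ∘ L = id
  have hAL : ∀ (x : (Fin n → ℝ) × (Fin n → ℝ)) (w : (Fin n → ℝ) × (Fin n → ℝ)), A x (w.1, D (Φinv x) w) = w := by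
    intro x w
    have hlam : (Φinv x).2 ∈ U := (hright x).1
    have hopen : IsOpen ((Set.univ : Set (Fin n → ℝ)) ×ˢ U) := isOpen_univ.prod hU
    have hmem : Φinv x ∈ (Set.univ : Set (Fin n → ℝ)) ×ˢ U := ⟨trivial, hlam⟩
    have hev : (Φinv ∘ Φf) =ᶠ[nhds (Φinv x)] id := by
      filter_upwards [hopen.mem_nhds hmem] with z hz
      have := hleft z.1 z.2 hz.2
      simpa using this
    have h1 : fderiv ℝ (Φinv ∘ Φf) (Φinv x) = ContinuousLinearMap.id ℝ ((Fin n → ℝ) × (Fin n → ℝ)) := by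
      rw [hev.fderiv_eq, fderiv_id]
    have hx : Φf (Φinv x) = x := (hright x).2
    have h2 : fderiv ℝ (Φinv ∘ Φf) (Φinv x)
        = (fderiv ℝ Φinv (Φf (Φinv x))).comp (fderiv ℝ Φf (Φinv x)) :=
      fderiv_comp _ (hΦinvd _) (hΦfd _)
    rw [hx] at h2
    have h3 := congrArg (fun T : (Fin n → ℝ) × (Fin n → ℝ) →L[ℝ] (Fin n → ℝ) × (Fin n → ℝ) => T w) (h2.symm.trans h1)
    simp only [ContinuousLinearMap.comp_apply, ContinuousLinearMap.coe_id', id_eq] at h3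
    rw [hD] at h3
    exact h3
  -- pd in terms of D
  have hpdD : ∀ (p : (Fin n → ℝ) × (Fin n → ℝ)) (i j : Fin n),
      pd (fun q' => φ q' p.2 i) j p.1 = D p (Pi.single j 1, 0) i := by
    rintro ⟨q', lam'⟩ i j
    have h1 : HasFDerivAt (fun q'' : Fin n → ℝ => (q'', lam'))
        ((ContinuousLinearMap.id ℝ (Fin n → ℝ)).prod 0) q' :=
      (hasFDerivAt_id q').prodMk (hasFDerivAt_const lam' q')
    have h3 : HasFDerivAt (fun q'' : Fin n → ℝ => φ q'' lam')
        ((D (q', lam')).comp ((ContinuousLinearMap.id ℝ (Fin n → ℝ)).prod 0)) q' :=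
      (hφd (q', lam')).hasFDerivAt.comp (g := fun z : (Fin n → ℝ) × (Fin n → ℝ) => φ z.1 z.2) q' h1
    have h2 : HasFDerivAt (fun q'' : Fin n → ℝ => φ q'' lam' i)
        ((ContinuousLinearMap.proj i :
            ((Fin n → ℝ)) →L[ℝ] ℝ).comp
          ((D (q', lam')).comp ((ContinuousLinearMap.id ℝ (Fin n → ℝ)).prod 0))) q' :=
      (ContinuousLinearMap.proj i :
            ((Fin n → ℝ)) →L[ℝ] ℝ).hasFDerivAt.comp q' h3
    show fderiv ℝ (fun q'' : Fin n → ℝ => φ q'' lam' i) q' (Pi.single j 1) = _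
    rw [h2.fderiv]
    simp
  -- derivative of f a
  have hfd : ∀ (a : Fin n) (x : (Fin n → ℝ) × (Fin n → ℝ)) (w : (Fin n → ℝ) × (Fin n → ℝ)),
      fderiv ℝ (f a) x w = (A x w).2 a := by
    intro a x w
    set e : (Fin n → ℝ) × (Fin n → ℝ) →L[ℝ] ℝ :=
      (ContinuousLinearMap.proj a).comp (ContinuousLinearMap.snd ℝ (Fin n → ℝ) (Fin n → ℝ)) with hedef
    have hfa : f a = fun y => e (Φinv y) := funext fun y => hf a y
    have h1 : fderiv ℝ (f a) x = e.comp (A x) := by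
      rw [hfa]
      exact (e.hasFDerivAt.comp x (hΦinvd x).hasFDerivAt).fderiv
    rw [h1]
    rfl
  -- expansion lemmas
  have hexpD1 : ∀ (p : (Fin n → ℝ) × (Fin n → ℝ)) (v : Fin n → ℝ),
      D p (v, 0) = ∑ j, v j • D p (Pi.single j 1, 0) := by
    intro p v
    have := clm_apply_eq_sum_s8 ((D p).comp (ContinuousLinearMap.inl ℝ (Fin n → ℝ) (Fin n → ℝ))) v
    simpa using this
  have hexpD2 : ∀ (p : (Fin n → ℝ) × (Fin n → ℝ)) (v : Fin n → ℝ),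
      D p (0, v) = ∑ j, v j • D p (0, Pi.single j 1) := by
    intro p v
    have := clm_apply_eq_sum_s8 ((D p).comp (ContinuousLinearMap.inr ℝ (Fin n → ℝ) (Fin n → ℝ))) v
    simpa using this
  have hexpA2 : ∀ (x : (Fin n → ℝ) × (Fin n → ℝ)) (v : Fin n → ℝ),
      A x (0, v) = ∑ j, v j • A x (0, Pi.single j 1) := by
    intro x v
    have := clm_apply_eq_sum_s8 ((A x).comp (ContinuousLinearMap.inr ℝ (Fin n → ℝ) (Fin n → ℝ))) v
    simpa using this
  have hsplit : ∀ (p : (Fin n → ℝ) × (Fin n → ℝ)) (w : (Fin n → ℝ) × (Fin n → ℝ)), D p w = D p (w.1, 0) + D p (0, w.2) := by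
    intro p w
    rw [← map_add]
    congr 1
    ext <;> simp
  constructor
  · -- constants of the motion
    intro a x
    have hlam : (Φinv x).2 ∈ U := (hright x).1
    have hxeq : ((Φinv x).1, φ (Φinv x).1 (Φinv x).2) = x := (hright x).2
    rw [hfd a x (X x)]
    have hu : X x = ((fun i => pdp H i x, (0 : Fin n → ℝ)).1,
        D (Φinv x) ((fun i => pdp H i x, (0 : Fin n → ℝ)))) := by
      rw [hX]
      refine Prod.ext rfl ?_
      funext i
      show -(pdq H i x + β i x) = D (Φinv x) (fun i => pdp H i x, (0 : Fin n → ℝ)) i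
      rw [hexpD1]
      rw [Finset.sum_apply]
      have hterm : ∀ j, (pdp H j x • D (Φinv x) (Pi.single j 1, 0)) i
          = pdp H j x * pd (fun q' => φ q' (Φinv x).2 j) i (Φinv x).1 := by
        intro j
        rw [Pi.smul_apply, smul_eq_mul]
        congr 1
        rw [← hpdD (Φinv x) i j, hclosed _ hlam i j]
      rw [Finset.sum_congr rfl fun j _ => hterm j]
      have hHJ' := hHJ _ hlam i (Φinv x).1
      rw [hxeq] at hHJ'
      linarith
    rw [hu, hAL x (fun i => pdp H i x, (0 : Fin n → ℝ))]
    rfl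
  · -- involution
    intro a b x
    have hlam : (Φinv x).2 ∈ U := (hright x).1
    set P : Matrix (Fin n) (Fin n) ℝ :=
      Matrix.of fun a i => (A x (0, Pi.single i 1)).2 a with hPdef
    set Qm : Matrix (Fin n) (Fin n) ℝ :=
      Matrix.of fun a i => (A x (Pi.single i 1, 0)).2 a with hQdef
    set M : Matrix (Fin n) (Fin n) ℝ :=
      Matrix.of fun k c => D (Φinv x) (0, Pi.single c 1) k with hMdef
    set Bm : Matrix (Fin n) (Fin n) ℝ :=
      Matrix.of fun k i => D (Φinv x) (Pi.single i 1, 0) k with hBdef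
    -- M * P = 1
    have hMP : M * P = 1 := by
      ext k i
      rw [Matrix.mul_apply, Matrix.one_apply]
      have h1 := hLA x (0, Pi.single i 1)
      have h2 : (A x (0, Pi.single i 1)).1 = 0 := congrArg Prod.fst h1
      have h3 : D (Φinv x) (A x (0, Pi.single i 1)) = Pi.single i 1 :=
        congrArg Prod.snd h1
      rw [hsplit, h2] at h3
      have h4 : D (Φinv x) (0, (A x (0, Pi.single i 1)).2) = Pi.single i 1 := by
        have : D (Φinv x) ((0 : Fin n → ℝ), 0) = 0 := by
          have : ((0 : Fin n → ℝ), (0 : Fin n → ℝ)) = (0 : (Fin n → ℝ) × (Fin n → ℝ)) := rfl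
          rw [this, map_zero]
        rw [this, zero_add] at h3
        exact h3
      rw [hexpD2] at h4
      have h5 := congrFun h4 k
      rw [Finset.sum_apply] at h5
      simp only [Pi.smul_apply, smul_eq_mul] at h5
      rw [Pi.single_apply] at h5
      rw [← h5]
      apply Finset.sum_congr rfl
      intro c _
      rw [mul_comm]
      rfl
    -- P * M = 1
    have hPM : P * M = 1 := by
      ext b c
      have h1 := hAL x ((0 : Fin n → ℝ), (Pi.single c 1 : Fin n → ℝ))
      simp only at h1
      have h2 : A x (0, D (Φinv x) ((0 : Fin n → ℝ), (Pi.single c 1 : Fin n → ℝ)))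
          = ((0 : Fin n → ℝ), (Pi.single c 1 : Fin n → ℝ)) := h1
      rw [hexpA2] at h2
      have h4 := congrArg Prod.snd h2
      rw [Prod.snd_sum] at h4
      have h5 := congrFun h4 b
      rw [Finset.sum_apply] at h5
      simp only [Prod.smul_snd, Pi.smul_apply, smul_eq_mul] at h5
      have h6 : ∑ k, P b k * M k c = (Pi.single c 1 : Fin n → ℝ) b := by
        rw [← h5]
        apply Finset.sum_congr rfl
        intro k _
        exact (mul_comm (P b k) (M k c)).trans rfl
      rw [Matrix.mul_apply, Matrix.one_apply, h6, Pi.single_apply]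
    -- M * Qm = -Bm
    have hMQ : M * Qm = -Bm := by
      ext k i
      rw [Matrix.mul_apply, Matrix.neg_apply]
      have h1 := hLA x (Pi.single i 1, 0)
      have h2 : (A x (Pi.single i 1, 0)).1 = Pi.single i 1 := congrArg Prod.fst h1
      have h3 : D (Φinv x) (A x (Pi.single i 1, 0)) = 0 := congrArg Prod.snd h1
      rw [hsplit, h2, hexpD2] at h3
      have h5 := congrFun h3 k
      rw [Pi.add_apply, Finset.sum_apply] at h5
      simp only [Pi.smul_apply, smul_eq_mul, Pi.zero_apply] at h5
      have h6 : Bm k i + ∑ c, (A x (Pi.single i 1, 0)).2 c * D (Φinv x) (0, Pi.single c 1) k = 0 := h5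
      have h7 : ∑ c, M k c * Qm c i
          = ∑ c, (A x (Pi.single i 1, 0)).2 c * D (Φinv x) (0, Pi.single c 1) k := by
        apply Finset.sum_congr rfl
        intro c _
        rw [mul_comm]
        rfl
      rw [h7]
      linarith
    -- Q = -(P * Bm)
    have hQeq : Qm = -(P * Bm) := by
      calc Qm = 1 * Qm := (one_mul _).symm
        _ = (P * M) * Qm := by rw [hPM]
        _ = P * (M * Qm) := by rw [Matrix.mul_assoc]
        _ = P * (-Bm) := by rw [hMQ]
        _ = -(P * Bm) := by rw [Matrix.mul_neg]
    -- Bm symmetric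
    have hBsym : Matrix.transpose Bm = Bm := by
      ext k i
      rw [Matrix.transpose_apply]
      show D (Φinv x) (Pi.single k 1, 0) i = D (Φinv x) (Pi.single i 1, 0) k
      rw [← hpdD (Φinv x) i k, ← hpdD (Φinv x) k i, hclosed _ hlam i k]
    -- entries
    have hQentry : ∀ (a : Fin n) (i : Fin n), pdq (f a) i x = Qm a i := by
      intro a i
      show fderiv ℝ (f a) x (Pi.single i 1, 0) = _
      rw [hfd]
      rfl
    have hPentry : ∀ (a : Fin n) (i : Fin n), pdp (f a) i x = P a i := by
      intro a i
      show fderiv ℝ (f a) x (0, Pi.single i 1) = _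
      rw [hfd]
      rfl
    have hfin : (Qm * Matrix.transpose P - P * Matrix.transpose Qm) = 0 := by
      rw [hQeq, Matrix.transpose_neg, Matrix.transpose_mul, hBsym]
      simp [Matrix.neg_mul, Matrix.mul_neg, Matrix.mul_assoc]
    have hfin2 := congrFun (congrFun hfin a) b
    rw [Matrix.sub_apply, Matrix.zero_apply, Matrix.mul_apply, Matrix.mul_apply] at hfin2
    simp only [Matrix.transpose_apply] at hfin2
    rw [← Finset.sum_sub_distrib] at hfin2
    rw [← hfin2]
    apply Finset.sum_congr rfl
    intro i _
    rw [hQentry, hPentry, hPentry, hQentry]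
end

section
/- For the forced Hamiltonian system on T^*ℝⁿ with H(q,p) = ½ Σ_i p_i² and force β = Σ_i κ_i p_i² dq^i, the functions f_a(q,p) = e^{κ_a q^a} p_a (a = 1,…,n) are constants of the motion of the forced dynamics q̇^i = p_i, ṗ_i = −κ_i p_i², and are pairwise in involution for the canonical Poisson bracket: {f_a, f_b} = 0. -/
section aux

variable {n : ℕ}

noncomputable def Qc (a : Fin n) : ((Fin n → ℝ) × (Fin n → ℝ)) →L[ℝ] ℝ :=
  (ContinuousLinearMap.proj a).comp (ContinuousLinearMap.fst ℝ (Fin n → ℝ) (Fin n → ℝ))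

noncomputable def Pc (a : Fin n) : ((Fin n → ℝ) × (Fin n → ℝ)) →L[ℝ] ℝ :=
  (ContinuousLinearMap.proj a).comp (ContinuousLinearMap.snd ℝ (Fin n → ℝ) (Fin n → ℝ))

lemma hasFDeriv_f (κ : ℝ) (a : Fin n) (x : (Fin n → ℝ) × (Fin n → ℝ)) :
    HasFDerivAt (fun x : (Fin n → ℝ) × (Fin n → ℝ) => Real.exp (κ * x.1 a) * x.2 a)
      ((κ * Real.exp (κ * x.1 a) * x.2 a) • Qc a + (Real.exp (κ * x.1 a)) • Pc a) x := by
  have hQ : HasFDerivAt (fun x : (Fin n → ℝ) × (Fin n → ℝ) => x.1 a) (Qc a) x :=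
    (Qc a).hasFDerivAt
  have hP : HasFDerivAt (fun x : (Fin n → ℝ) × (Fin n → ℝ) => x.2 a) (Pc a) x :=
    (Pc a).hasFDerivAt
  have hE : HasFDerivAt (fun x : (Fin n → ℝ) × (Fin n → ℝ) => Real.exp (κ * x.1 a))
      ((Real.exp (κ * x.1 a)) • (κ • Qc a)) x := (hQ.const_mul κ).exp
  have : HasFDerivAt (fun x : (Fin n → ℝ) × (Fin n → ℝ) => Real.exp (κ * x.1 a) * x.2 a) _ x :=
    hE.mul hP
  refine this.congr_fderiv ?_
  ext v <;> simp [Qc, Pc] <;> ring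

lemma pdq_f (κ : ℝ) (a i : Fin n) (x : (Fin n → ℝ) × (Fin n → ℝ)) :
    pdq (fun x : (Fin n → ℝ) × (Fin n → ℝ) => Real.exp (κ * x.1 a) * x.2 a) i x
      = if a = i then κ * Real.exp (κ * x.1 a) * x.2 a else 0 := by
  rw [pdq, (hasFDeriv_f κ a x).fderiv]
  simp [Qc, Pc, Pi.single_apply]

lemma pdp_f (κ : ℝ) (a i : Fin n) (x : (Fin n → ℝ) × (Fin n → ℝ)) :
    pdp (fun x : (Fin n → ℝ) × (Fin n → ℝ) => Real.exp (κ * x.1 a) * x.2 a) i x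
      = if a = i then Real.exp (κ * x.1 a) else 0 := by
  rw [pdp, (hasFDeriv_f κ a x).fderiv]
  simp [Qc, Pc, Pi.single_apply]

end aux

theorem drag_example_constants_in_involution (n : ℕ) (κ : Fin n → ℝ)
    (f : Fin n → (Fin n → ℝ) × (Fin n → ℝ) → ℝ)
    (hf : ∀ a x, f a x = Real.exp (κ a * x.1 a) * x.2 a) :
    -- constants of the motion of q̇ = p, ṗ_i = −κ_i p_i²
    (∀ a, ∀ x : (Fin n → ℝ) × (Fin n → ℝ),
      (∑ i, (x.2 i * pdq (f a) i x - κ i * (x.2 i) ^ 2 * pdp (f a) i x)) = 0) ∧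
    -- pairwise in involution for the canonical Poisson bracket
    (∀ a b, ∀ x : (Fin n → ℝ) × (Fin n → ℝ),
      (∑ i, (pdq (f a) i x * pdp (f b) i x
        - pdp (f a) i x * pdq (f b) i x)) = 0) := by
  have hfa : ∀ a, f a = fun x : (Fin n → ℝ) × (Fin n → ℝ) => Real.exp (κ a * x.1 a) * x.2 a :=
    fun a => funext (hf a)
  constructor
  · intro a x
    simp only [hfa, pdq_f, pdp_f, mul_ite, mul_zero]
    rw [Finset.sum_eq_single a]
    · simp; ring
    · intro i _ hi; simp [Ne.symm hi]
    · exact fun h => absurd (Finset.mem_univ a) h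
  · intro a b x
    simp only [hfa, pdq_f, pdp_f, mul_ite, ite_mul, mul_zero, zero_mul]
    rw [Finset.sum_eq_single a]
    · by_cases h : b = a <;> simp [h] <;> ring
    · intro i _ hi; simp [Ne.symm hi]
    · exact fun h => absurd (Finset.mem_univ a) h
end

section
/- For H(q,p) = ½ Σ_i p_i² and β = Σ_i κ_i p_i² dq^i on T^*ℝⁿ with all κ_i ≠ 0, the 1-form γ_λ = Σ_i λ_i e^{−κ_i q^i} dq^i is, for each λ ∈ ℝⁿ, an exact 1-form (γ_λ = dg with g = −Σ_i (λ_i/κ_i) e^{−κ_i q^i}) solving the forced Hamilton–Jacobi equation d(H ∘ γ_λ) = −γ_λ*β. -/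
lemma hasFDerivAt_exp_coord {n : ℕ} (i : Fin n) (a c : ℝ) (q : Fin n → ℝ) :
    HasFDerivAt (fun q : Fin n → ℝ => a * Real.exp (c * q i))
      ((a * c * Real.exp (c * q i)) • ContinuousLinearMap.proj (R := ℝ) (φ := fun _ : Fin n => ℝ) i) q := by
  have h1 : HasFDerivAt (fun q : Fin n → ℝ => q i)
      (ContinuousLinearMap.proj (R := ℝ) (φ := fun _ : Fin n => ℝ) i) q := by
    exact (ContinuousLinearMap.proj (R := ℝ) (φ := fun _ : Fin n => ℝ) i).hasFDerivAt
  have h2 := h1.const_mul c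
  have h3 := (Real.hasDerivAt_exp (c * q i)).comp_hasFDerivAt q h2
  have h4 := h3.const_mul a
  refine h4.congr_fderiv ?_
  ext v
  simp [mul_comm, mul_assoc, mul_left_comm]

lemma pd_exp_coord {n : ℕ} (i j : Fin n) (a c : ℝ) (q : Fin n → ℝ) :
    pd (fun q : Fin n → ℝ => a * Real.exp (c * q i)) j q
      = a * c * Real.exp (c * q i) * (Pi.single (M := fun _ : Fin n => ℝ) j 1 i) := by
  unfold pd
  rw [(hasFDerivAt_exp_coord i a c q).fderiv]
  simp [mul_comm]

theorem drag_example_complete_solution (n : ℕ) (κ lam : Fin n → ℝ)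
    (hκ : ∀ i, κ i ≠ 0)
    (γ : Fin n → (Fin n → ℝ) → ℝ)
    (hγ : ∀ i q, γ i q = lam i * Real.exp (-(κ i) * q i))
    (g : (Fin n → ℝ) → ℝ)
    (hg : ∀ q, g q = -∑ i, (lam i / κ i) * Real.exp (-(κ i) * q i)) :
    -- γ_λ is exact: γ_λ = dg
    (∀ i q, γ i q = pd g i q) ∧
    -- forced Hamilton–Jacobi equation in coordinates
    (∀ i, ∀ q : Fin n → ℝ,
      (∑ j, γ j q * pd (γ j) i q) + κ i * (γ i q) ^ 2 = 0) := by
  have hγf : ∀ j, γ j = fun q : Fin n → ℝ => lam j * Real.exp (-(κ j) * q j) :=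
    fun j => funext fun q => hγ j q
  constructor
  · intro i q
    have hgf : g = fun q : Fin n → ℝ => -∑ j, (lam j / κ j) * Real.exp (-(κ j) * q j) :=
      funext fun q => hg q
    have hD : HasFDerivAt g
        (-∑ j, ((lam j / κ j) * (-(κ j)) * Real.exp (-(κ j) * q j)) •
          ContinuousLinearMap.proj (R := ℝ) (φ := fun _ : Fin n => ℝ) j) q := by
      rw [hgf]
      exact (HasFDerivAt.fun_sum fun j _ => hasFDerivAt_exp_coord j (lam j / κ j) (-(κ j)) q).neg
    unfold pd
    rw [hD.fderiv]
    simp only [ContinuousLinearMap.neg_apply, ContinuousLinearMap.sum_apply,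
      ContinuousLinearMap.smul_apply, ContinuousLinearMap.proj_apply, smul_eq_mul]
    rw [Finset.sum_eq_single i]
    · rw [hγ i q]
      have : Pi.single (M := fun _ : Fin n => ℝ) i 1 i = 1 := Pi.single_eq_same i 1
      have h2 : lam i / κ i * -κ i = -lam i := by
        rw [div_mul_eq_mul_div, mul_neg, neg_div, mul_div_assoc, div_self (hκ i), mul_one]
      rw [this, mul_one, h2]
      ring
    · intro j _ hj
      rw [Pi.single_eq_of_ne hj]
      ring
    · intro h; exact absurd (Finset.mem_univ i) h
  · intro i q
    have hsum : (∑ j, γ j q * pd (γ j) i q) = γ i q * (lam i * (-(κ i)) * Real.exp (-(κ i) * q i)) := by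
      rw [Finset.sum_eq_single i]
      · rw [hγf i, pd_exp_coord, Pi.single_eq_same]
        ring_nf
      · intro j _ hj
        rw [hγf j, pd_exp_coord, Pi.single_eq_of_ne hj]
        ring
      · intro h; exact absurd (Finset.mem_univ i) h
    rw [hsum, hγ i q]
    ring
end

section
/- If the Rayleigh tensor field R̂ = R^i_j(q) (∂/∂q^i) ⊗ dq^j on ℝⁿ is non-degenerate (the matrix (R^i_j(q)) is invertible for all q), then the 2-form dR̃, where R̃ = Σ_{i,j} R^i_j(q) p_i dq^j is the associated linear Rayleigh force on T^*ℝⁿ, is a symplectic form on T^*ℝⁿ: it is closed and its kernel at every point is zero. -/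
lemma fderiv_apply_eq_sum_pd {n : ℕ} (f : (Fin n → ℝ) → ℝ) (q v : Fin n → ℝ) :
    fderiv ℝ f q v = ∑ l, v l * pd f l q := by
  have hv : v = ∑ l : Fin n, v l • (Pi.single l 1 : Fin n → ℝ) := by
    funext a
    simp [Finset.sum_apply, Pi.single_apply]
  conv_lhs => rw [hv]
  rw [map_sum]
  simp [pd, smul_eq_mul]

lemma pd_contDiff {n : ℕ} {f : (Fin n → ℝ) → ℝ} (hf : ContDiff ℝ (⊤ : ℕ∞) f) (i : Fin n) :
    ContDiff ℝ (⊤ : ℕ∞) (pd f i) :=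
  (hf.fderiv_right (by simp)).clm_apply contDiff_const

lemma rayleigh_key {n : ℕ} (R : Fin n → Fin n → (Fin n → ℝ) → ℝ)
    (hR : ∀ i j, ContDiff ℝ (⊤ : ℕ∞) (R i j))
    (c e : Fin n → Fin n → ℝ)
    (x X : (Fin n → ℝ) × (Fin n → ℝ)) :
    fderiv ℝ (fun y : (Fin n → ℝ) × (Fin n → ℝ) =>
        (∑ i, ∑ j, ∑ k, pd (R k j) i y.1 * y.2 k * c i j)
          - ∑ i, ∑ j, R j i y.1 * e i j) x X
      = (∑ i, ∑ j, ∑ k, ((∑ l, X.1 l * pd (pd (R k j) i) l x.1) * x.2 k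
            + pd (R k j) i x.1 * X.2 k) * c i j)
        - ∑ i, ∑ j, (∑ l, X.1 l * pd (R j i) l x.1) * e i j := by
  have h1 : ∀ k j i : Fin n, HasFDerivAt (fun y : (Fin n → ℝ) × (Fin n → ℝ) => pd (R k j) i y.1)
      ((fderiv ℝ (pd (R k j) i) x.1).comp (ContinuousLinearMap.fst ℝ (Fin n → ℝ) (Fin n → ℝ))) x :=
    fun k j i => by
    simpa [Function.comp_def] using
      (((pd_contDiff (hR k j) i).differentiable (by simp) x.1).hasFDerivAt).comp x
        (hasFDerivAt_fst (p := x))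
  have h2 : ∀ k : Fin n, HasFDerivAt (fun y : (Fin n → ℝ) × (Fin n → ℝ) => y.2 k)
      ((ContinuousLinearMap.proj k : (Fin n → ℝ) →L[ℝ] ℝ).comp (ContinuousLinearMap.snd ℝ (Fin n → ℝ) (Fin n → ℝ))) x :=
    fun k => ((ContinuousLinearMap.proj k : (Fin n → ℝ) →L[ℝ] ℝ).comp
      (ContinuousLinearMap.snd ℝ (Fin n → ℝ) (Fin n → ℝ))).hasFDerivAt
  have h3 : ∀ j i : Fin n, HasFDerivAt (fun y : (Fin n → ℝ) × (Fin n → ℝ) => R j i y.1)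
      ((fderiv ℝ (R j i) x.1).comp (ContinuousLinearMap.fst ℝ (Fin n → ℝ) (Fin n → ℝ))) x :=
    fun j i => by
    simpa [Function.comp_def] using
      (((hR j i).differentiable (by simp) x.1).hasFDerivAt).comp x (hasFDerivAt_fst (p := x))
  have hsum1 : HasFDerivAt (fun y : (Fin n → ℝ) × (Fin n → ℝ) => ∑ i, ∑ j, ∑ k, pd (R k j) i y.1 * y.2 k * c i j)
      (∑ i, ∑ j, ∑ k, (c i j) • ((pd (R k j) i x.1) •
          ((ContinuousLinearMap.proj k : (Fin n → ℝ) →L[ℝ] ℝ).comp (ContinuousLinearMap.snd ℝ (Fin n → ℝ) (Fin n → ℝ)))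
        + x.2 k • ((fderiv ℝ (pd (R k j) i) x.1).comp (ContinuousLinearMap.fst ℝ (Fin n → ℝ) (Fin n → ℝ))))) x := by
    apply HasFDerivAt.fun_sum; intro i _
    apply HasFDerivAt.fun_sum; intro j _
    apply HasFDerivAt.fun_sum; intro k _
    exact ((h1 k j i).mul (h2 k)).mul_const _
  have hsum2 : HasFDerivAt (fun y : (Fin n → ℝ) × (Fin n → ℝ) => ∑ i, ∑ j, R j i y.1 * e i j)
      (∑ i, ∑ j, (e i j) • ((fderiv ℝ (R j i) x.1).comp (ContinuousLinearMap.fst ℝ (Fin n → ℝ) (Fin n → ℝ)))) x := by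
    apply HasFDerivAt.fun_sum; intro i _
    apply HasFDerivAt.fun_sum; intro j _
    exact (h3 j i).mul_const _
  rw [(hsum1.fun_sub hsum2).fderiv]
  simp only [ContinuousLinearMap.sub_apply, ContinuousLinearMap.coe_sum', Finset.sum_apply,
    ContinuousLinearMap.smul_apply, ContinuousLinearMap.add_apply,
    ContinuousLinearMap.comp_apply, ContinuousLinearMap.coe_fst', ContinuousLinearMap.coe_snd',
    ContinuousLinearMap.proj_apply, smul_eq_mul, fderiv_apply_eq_sum_pd]
  congr 1
  · refine Finset.sum_congr rfl fun i _ => Finset.sum_congr rfl fun j _ =>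
      Finset.sum_congr rfl fun k _ => ?_
    ring
  · refine Finset.sum_congr rfl fun i _ => Finset.sum_congr rfl fun j _ => ?_
    ring

lemma sum_swap2_zero {n : ℕ} (F : Fin n → Fin n → ℝ) (h : ∀ a b, F a b = - F b a) :
    ∑ a, ∑ b, F a b = 0 := by
  have h1 : ∑ a, ∑ b, F a b = ∑ a, ∑ b, F b a := Finset.sum_comm
  have h2 : ∑ a, ∑ b, F b a = - ∑ a, ∑ b, F a b := by
    rw [← Finset.sum_neg_distrib]
    refine Finset.sum_congr rfl fun a _ => ?_
    rw [← Finset.sum_neg_distrib]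
    exact Finset.sum_congr rfl fun b _ => h b a
  linarith

lemma sum4_zero {n : ℕ} (G : Fin n → Fin n → Fin n → Fin n → ℝ)
    (h : ∀ i j k l, G i j k l = - G l j k i) :
    ∑ i, ∑ j, ∑ k, ∑ l, G i j k l = 0 := by
  have reorder : ∀ i, (∑ j, ∑ k, ∑ l, G i j k l) = ∑ l, ∑ j, ∑ k, G i j k l := by
    intro i
    rw [show (∑ j, ∑ k, ∑ l, G i j k l) = ∑ j, ∑ l, ∑ k, G i j k l from
      Finset.sum_congr rfl fun j _ => Finset.sum_comm, Finset.sum_comm]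
  calc ∑ i, ∑ j, ∑ k, ∑ l, G i j k l = ∑ i, ∑ l, ∑ j, ∑ k, G i j k l :=
        Finset.sum_congr rfl fun i _ => reorder i
    _ = 0 := by
        refine sum_swap2_zero (fun a b => ∑ j, ∑ k, G a j k b) fun a b => ?_
        rw [← Finset.sum_neg_distrib]
        refine Finset.sum_congr rfl fun j _ => ?_
        rw [← Finset.sum_neg_distrib]
        exact Finset.sum_congr rfl fun k _ => h a j k b

lemma sum3_cycle {n : ℕ} (s t : Fin n → Fin n → Fin n → ℝ) (h : ∀ a b c, s a b c = t b c a) :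
    ∑ i, ∑ j, ∑ k, s i j k = ∑ i, ∑ j, ∑ k, t i j k := by
  calc ∑ i, ∑ j, ∑ k, s i j k = ∑ i, ∑ j, ∑ k, t j k i :=
        Finset.sum_congr rfl fun i _ => Finset.sum_congr rfl fun j _ =>
          Finset.sum_congr rfl fun k _ => h i j k
    _ = ∑ j, ∑ i, ∑ k, t j k i := Finset.sum_comm
    _ = ∑ j, ∑ k, ∑ i, t j k i := Finset.sum_congr rfl fun j _ => Finset.sum_comm

lemma alg_closed {n : ℕ} (D2 : Fin n → Fin n → Fin n → Fin n → ℝ)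
    (hD2 : ∀ k j i l, D2 k j i l = D2 k j l i)
    (D1 : Fin n → Fin n → Fin n → ℝ) (p X1 X2 Y1 Y2 Z1 Z2 : Fin n → ℝ) :
    ((∑ i, ∑ j, ∑ k, ((∑ l, X1 l * D2 k j i l) * p k + D1 k j i * X2 k)
        * (Y1 i * Z1 j - Y1 j * Z1 i))
      - ∑ i, ∑ j, (∑ l, X1 l * D1 j i l) * (Y1 i * Z2 j - Z1 i * Y2 j))
    + ((∑ i, ∑ j, ∑ k, ((∑ l, Y1 l * D2 k j i l) * p k + D1 k j i * Y2 k)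
        * (Z1 i * X1 j - Z1 j * X1 i))
      - ∑ i, ∑ j, (∑ l, Y1 l * D1 j i l) * (Z1 i * X2 j - X1 i * Z2 j))
    + ((∑ i, ∑ j, ∑ k, ((∑ l, Z1 l * D2 k j i l) * p k + D1 k j i * Z2 k)
        * (X1 i * Y1 j - X1 j * Y1 i))
      - ∑ i, ∑ j, (∑ l, Z1 l * D1 j i l) * (X1 i * Y2 j - Y1 i * X2 j)) = 0 := by
  have norm : ∀ U1 U2 V1 V2 W1 W2 : Fin n → ℝ,
      ((∑ i, ∑ j, ∑ k, ((∑ l, U1 l * D2 k j i l) * p k + D1 k j i * U2 k)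
          * (V1 i * W1 j - V1 j * W1 i))
        - ∑ i, ∑ j, (∑ l, U1 l * D1 j i l) * (V1 i * W2 j - W1 i * V2 j))
      = ((∑ i, ∑ j, ∑ k, ∑ l, U1 l * D2 k j i l * p k * (V1 i * W1 j - V1 j * W1 i))
         + ∑ i, ∑ j, ∑ k, D1 k j i * U2 k * (V1 i * W1 j - V1 j * W1 i))
        - ∑ i, ∑ j, ∑ l, U1 l * D1 j i l * (V1 i * W2 j - W1 i * V2 j) := by
    intro U1 U2 V1 V2 W1 W2
    congr 1
    · simp only [← Finset.sum_add_distrib]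
      refine Finset.sum_congr rfl fun i _ => Finset.sum_congr rfl fun j _ =>
        Finset.sum_congr rfl fun k _ => ?_
      rw [add_mul, Finset.sum_mul, Finset.sum_mul]
    · refine Finset.sum_congr rfl fun i _ => Finset.sum_congr rfl fun j _ => ?_
      rw [Finset.sum_mul]
  rw [norm, norm, norm]
  have hA : (∑ i, ∑ j, ∑ k, ∑ l, X1 l * D2 k j i l * p k * (Y1 i * Z1 j - Y1 j * Z1 i))
      + (∑ i, ∑ j, ∑ k, ∑ l, Y1 l * D2 k j i l * p k * (Z1 i * X1 j - Z1 j * X1 i))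
      + (∑ i, ∑ j, ∑ k, ∑ l, Z1 l * D2 k j i l * p k * (X1 i * Y1 j - X1 j * Y1 i)) = 0 := by
    simp only [← Finset.sum_add_distrib]
    refine sum4_zero _ fun i j k l => ?_
    rw [hD2 k j l i]
    ring
  have hB : ((∑ i, ∑ j, ∑ k, D1 k j i * X2 k * (Y1 i * Z1 j - Y1 j * Z1 i))
      + (∑ i, ∑ j, ∑ k, D1 k j i * Y2 k * (Z1 i * X1 j - Z1 j * X1 i))
      + (∑ i, ∑ j, ∑ k, D1 k j i * Z2 k * (X1 i * Y1 j - X1 j * Y1 i)))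
      = ((∑ i, ∑ j, ∑ l, X1 l * D1 j i l * (Y1 i * Z2 j - Z1 i * Y2 j))
      + (∑ i, ∑ j, ∑ l, Y1 l * D1 j i l * (Z1 i * X2 j - X1 i * Z2 j))
      + (∑ i, ∑ j, ∑ l, Z1 l * D1 j i l * (X1 i * Y2 j - Y1 i * X2 j))) := by
    simp only [← Finset.sum_add_distrib]
    refine sum3_cycle _ _ fun a b c => ?_
    ring
  linarith

lemma pd_comm {n : ℕ} {f : (Fin n → ℝ) → ℝ} (hf : ContDiff ℝ (⊤ : ℕ∞) f) (i l : Fin n)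
    (q : Fin n → ℝ) : pd (pd f i) l q = pd (pd f l) i q := by
  have hdf : ContDiff ℝ (⊤ : ℕ∞) (fderiv ℝ f) := hf.fderiv_right (by simp)
  have h1 : ∀ (u w : Fin n → ℝ),
      fderiv ℝ (fun q' => fderiv ℝ f q' u) q w = fderiv ℝ (fderiv ℝ f) q w u := by
    intro u w
    rw [fderiv_clm_apply (hdf.differentiable (by simp) q) (differentiableAt_const u)]
    simp
  have hsymm := second_derivative_symmetric
    (f := f) (f' := fderiv ℝ f) (f'' := fderiv ℝ (fderiv ℝ f) q)
    (fun y => (hf.differentiable (by simp) y).hasFDerivAt)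
    ((hdf.differentiable (by simp) q).hasFDerivAt)
  show fderiv ℝ (fun q' => fderiv ℝ f q' (Pi.single i 1)) q (Pi.single l 1)
      = fderiv ℝ (fun q' => fderiv ℝ f q' (Pi.single l 1)) q (Pi.single i 1)
  rw [h1, h1, hsymm]

theorem dRayleigh_force_is_symplectic (n : ℕ)
    (R : Fin n → Fin n → (Fin n → ℝ) → ℝ)    -- R^i_j(q)
    (hR : ∀ i j, ContDiff ℝ (⊤ : ℕ∞) (R i j))
    -- non-degeneracy of the Rayleigh tensor: (R^i_j(q)) is invertible for all q
    (hRnd : ∀ q, IsUnit (Matrix.of (fun i j => R i j q)).det)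
    -- the 2-form dR̃ in coordinates
    (Ω : (Fin n → ℝ) × (Fin n → ℝ) →
      ((Fin n → ℝ) × (Fin n → ℝ)) → ((Fin n → ℝ) × (Fin n → ℝ)) → ℝ)
    (hΩ : ∀ x X Z, Ω x X Z
      = (∑ i, ∑ j, ∑ k, pd (R k j) i x.1 * x.2 k * (X.1 i * Z.1 j - X.1 j * Z.1 i))
        - ∑ i, ∑ j, R j i x.1 * (X.1 i * Z.2 j - Z.1 i * X.2 j)) :
    -- closedness: the cyclic sum of directional derivatives of Ω on constant
    -- vector fields vanishes (dΩ = 0)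
    (∀ x : (Fin n → ℝ) × (Fin n → ℝ),
      ∀ X Y Z : (Fin n → ℝ) × (Fin n → ℝ),
        fderiv ℝ (fun y => Ω y Y Z) x X
        + fderiv ℝ (fun y => Ω y Z X) x Y
        + fderiv ℝ (fun y => Ω y X Y) x Z = 0) ∧
    -- non-degeneracy: the kernel of Ω at every point is zero
    (∀ x : (Fin n → ℝ) × (Fin n → ℝ), ∀ X : (Fin n → ℝ) × (Fin n → ℝ),
      (∀ Z, Ω x X Z = 0) → X = 0) := by
  constructor
  · intro x X Y Z
    have key : ∀ A B C : (Fin n → ℝ) × (Fin n → ℝ),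
        fderiv ℝ (fun y => Ω y B C) x A
        = (∑ i, ∑ j, ∑ k, ((∑ l, A.1 l * pd (pd (R k j) i) l x.1) * x.2 k
              + pd (R k j) i x.1 * A.2 k) * (B.1 i * C.1 j - B.1 j * C.1 i))
          - ∑ i, ∑ j, (∑ l, A.1 l * pd (R j i) l x.1) * (B.1 i * C.2 j - C.1 i * B.2 j) := by
      intro A B C
      have hfun : (fun y => Ω y B C)
          = fun y : (Fin n → ℝ) × (Fin n → ℝ) =>
            (∑ i, ∑ j, ∑ k, pd (R k j) i y.1 * y.2 k * (B.1 i * C.1 j - B.1 j * C.1 i))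
              - ∑ i, ∑ j, R j i y.1 * (B.1 i * C.2 j - C.1 i * B.2 j) :=
        funext fun y => hΩ y B C
      rw [hfun]
      exact rayleigh_key R hR (fun i j => B.1 i * C.1 j - B.1 j * C.1 i)
        (fun i j => B.1 i * C.2 j - C.1 i * B.2 j) x A
    rw [key X Y Z, key Y Z X, key Z X Y]
    exact alg_closed (fun k j i l => pd (pd (R k j) i) l x.1)
      (fun k j i l => pd_comm (hR k j) i l x.1)
      (fun k j i => pd (R k j) i x.1) x.2 X.1 X.2 Y.1 Y.2 Z.1 Z.2
  · intro x X h
    have hMinj : ∀ (A : Matrix (Fin n) (Fin n) ℝ), IsUnit A.det →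
        ∀ v : Fin n → ℝ, A.mulVec v = 0 → v = 0 := by
      intro A hA v hv
      have := Matrix.mulVec_injective_iff_isUnit.2 ((Matrix.isUnit_iff_isUnit_det A).2 hA)
      exact this (by rw [hv, Matrix.mulVec_zero])
    have hX1 : X.1 = 0 := by
      apply hMinj (Matrix.of fun i j => R i j x.1) (hRnd x.1)
      funext j0
      have h0 := h (0, Pi.single j0 1)
      rw [hΩ] at h0
      simp [Pi.single_apply, mul_ite] at h0
      have : (Matrix.of fun i j => R i j x.1).mulVec X.1 j0 = ∑ i, R j0 i x.1 * X.1 i := by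
        simp [Matrix.mulVec, dotProduct]
      rw [this]
      simpa using h0
    have hX2 : X.2 = 0 := by
      apply hMinj (Matrix.of fun i j => R i j x.1).transpose
        (by rw [Matrix.det_transpose]; exact hRnd x.1)
      funext i0
      have h0 := h (Pi.single i0 1, 0)
      rw [hΩ, hX1] at h0
      simp [Pi.single_apply, mul_ite] at h0
      have : ((Matrix.of fun i j => R i j x.1).transpose).mulVec X.2 i0 = ∑ j, R j i0 x.1 * X.2 j := by
        simp [Matrix.mulVec, dotProduct, Matrix.transpose_apply]
      rw [this]
      simpa using h0
    exact Prod.ext hX1 hX2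
end

section
/- Let (H,β) be a forced Hamiltonian system on T^*Q with H invariant under the lifted action of a Lie group G, and let ξ ∈ 𝔤 with complete lift ξ^c_Q on T^*Q. Then the momentum function J^ξ = ι_{ξ^c_Q} θ_Q is a constant of the motion of X_{H,β} if and only if β(ξ^c_Q) = 0; in particular X_{H,β}(J^ξ) = −β(ξ^c_Q). -/
/- STATEMENT 17: Let (H,β) be a forced Hamiltonian system on T^*Q = ℝⁿ × ℝⁿ
with canonical symplectic form ω(A,B) = Σ (A_q^i B_p_i − B_q^i A_p_i), and let
ξ^c be the complete lift of an infinitesimal symmetry, with momentum function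
J^ξ = ι_{ξ^c} θ, θ(x)(v) = Σ p_i v_q^i.  Given that dJ^ξ = ι_{ξ^c} ω and
ξ^c(H) = 0, we have X_{H,β}(J^ξ) = −β(ξ^c); in particular J^ξ is a constant
of the motion iff β(ξ^c) = 0. -/

theorem momentum_constant_iff_force_annihilates (n : ℕ)
    (H : (Fin n → ℝ) × (Fin n → ℝ) → ℝ) (hH : ContDiff ℝ (⊤ : ℕ∞) H)
    -- semibasic external force β = Σ β_i dq^i
    (βc : Fin n → (Fin n → ℝ) × (Fin n → ℝ) → ℝ)
    -- the complete lift ξ^c_Q, a vector field on T^*Q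
    (ξc : (Fin n → ℝ) × (Fin n → ℝ) → (Fin n → ℝ) × (Fin n → ℝ))
    -- the momentum function J^ξ = ι_{ξ^c} θ_Q
    (J : (Fin n → ℝ) × (Fin n → ℝ) → ℝ)
    (hJ : ∀ x, J x = ∑ i, x.2 i * (ξc x).1 i)
    -- dJ^ξ = ι_{ξ^c} ω_Q (consequence of ℒ_{ξ^c} θ_Q = 0)
    (hdJ : ∀ x v, fderiv ℝ J x v
      = ∑ i, ((ξc x).1 i * v.2 i - v.1 i * (ξc x).2 i))
    -- G-invariance of H: ξ^c(H) = 0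
    (hinv : ∀ x, fderiv ℝ H x (ξc x) = 0)
    -- the forced dynamics: ι_{X_{H,β}} ω_Q = dH + β
    (X : (Fin n → ℝ) × (Fin n → ℝ) → (Fin n → ℝ) × (Fin n → ℝ))
    (hX : ∀ x v, (∑ i, ((X x).1 i * v.2 i - v.1 i * (X x).2 i))
      = fderiv ℝ H x v + ∑ i, βc i x * v.1 i) :
    -- X_{H,β}(J^ξ) = −β(ξ^c)
    (∀ x, fderiv ℝ J x (X x) = -∑ i, βc i x * (ξc x).1 i) ∧
    -- J^ξ is a constant of the motion iff β(ξ^c) = 0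
    ((∀ x, fderiv ℝ J x (X x) = 0) ↔ (∀ x, (∑ i, βc i x * (ξc x).1 i) = 0)) := by
  have key : ∀ x, fderiv ℝ J x (X x) = -∑ i, βc i x * (ξc x).1 i := by
    intro x
    have h1 := hX x (ξc x)
    rw [hinv x, zero_add] at h1
    rw [hdJ x (X x), ← h1, ← Finset.sum_neg_distrib]
    exact Finset.sum_congr rfl fun i _ => by ring
  refine ⟨key, ?_⟩
  constructor
  · intro h x
    have := key x
    rw [h x] at this
    linarith
  · intro h x
    rw [key x, h x, neg_zero]
end
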